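/- arXiv:2102.07095 — 4 statements merged into one kernel-verified Lean document; each statement's English description precedes it below -/
import Mathlib

section
/- In a non-symmetric unital operad O, the circle product f ∘ g := Σ_{i=1}^{n} (-1)^{(i-1)(m-1)} f ∘_i g (for f ∈ O^n, g ∈ O^m) satisfies the graded right pre-Lie identity: (f ∘ g) ∘ h − f ∘ (g ∘ h) = (-1)^{(m-1)(p-1)} ((f ∘ h) ∘ g − f ∘ (h ∘ g)) for f ∈ O^n, g ∈ O^m, h ∈ O^p. -/
open Finset

/-- A non-symmetric unital operad in `k`-modules, presented with an ambient module `A`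
whose graded pieces `piece n` play the role of `O^n`, partial compositions
`comp f g i` (denoted `f ∘ᵢ g`, declared to vanish for out-of-range data), and a unit. -/
structure NSOperad (k A : Type) [CommRing k] [AddCommGroup A] [Module k A] where
  piece : ℕ → Submodule k A
  comp : A → A → ℕ → A
  one : A
  one_mem : one ∈ piece 1
  comp_mem : ∀ {n m : ℕ} {f g : A}, f ∈ piece n → g ∈ piece m → ∀ i : ℕ,
      comp f g i ∈ piece (n + m - 1)
  comp_add_left : ∀ (f f' g : A) (i : ℕ), comp (f + f') g i = comp f g i + comp f' g i
  comp_add_right : ∀ (f g g' : A) (i : ℕ), comp f (g + g') i = comp f g i + comp f g' i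
  comp_smul_left : ∀ (c : k) (f g : A) (i : ℕ), comp (c • f) g i = c • comp f g i
  comp_smul_right : ∀ (c : k) (f g : A) (i : ℕ), comp f (c • g) i = c • comp f g i
  comp_out_of_range : ∀ {n : ℕ} {f : A}, f ∈ piece n → ∀ (g : A) (i : ℕ),
      (n < i ∨ n = 0) → comp f g i = 0
  assoc₁ : ∀ {n m p : ℕ} {f g h : A}, f ∈ piece n → g ∈ piece m → h ∈ piece p →
      ∀ i j : ℕ, 1 ≤ j → j < i → i ≤ n →
      comp (comp f g i) h j = comp (comp f h j) g (i + p - 1)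
  assoc₂ : ∀ {n m p : ℕ} {f g h : A}, f ∈ piece n → g ∈ piece m → h ∈ piece p →
      ∀ i j : ℕ, 1 ≤ i → i ≤ j → j < m + i →
      comp (comp f g i) h j = comp f (comp g h (j - i + 1)) i
  assoc₃ : ∀ {n m p : ℕ} {f g h : A}, f ∈ piece n → g ∈ piece m → h ∈ piece p →
      ∀ i j : ℕ, 1 ≤ i → m + i ≤ j → j ≤ n + m - 1 →
      comp (comp f g i) h j = comp (comp f h (j - m + 1)) g i
  unit_right : ∀ {n : ℕ} {f : A}, f ∈ piece n → ∀ i : ℕ, 1 ≤ i → i ≤ n → comp f one i = f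
  unit_left : ∀ f : A, comp one f 1 = f

variable {k A : Type} [CommRing k] [AddCommGroup A] [Module k A]

/-- The circle product `f ∘ g = ∑_{i=1}^n (-1)^{(i-1)(m-1)} f ∘ᵢ g` for `f ∈ O^n`, `g ∈ O^m`.
(The sign exponent `(i+1)*(m+1)` has the same parity as `(i-1)(m-1)`.) -/
def NSOperad.circle (O : NSOperad k A) (n m : ℕ) (f g : A) : A :=
  ∑ i ∈ Finset.Icc 1 n, ((-1 : ℤ) ^ ((i + 1) * (m + 1))) • O.comp f g i

/-!
Expand `(f ∘ g) ∘ h` as a double sum of terms `±(f ∘ᵢ g) ∘ⱼ h`. By the sequential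
associativity axiom, the terms with `i ≤ j < i + m` (`h` plugged into `g`) add up to
`f ∘ (g ∘ h)`, so the associator is the sum of the terms in which `g` and `h` are plugged into
different inputs of `f`. By the parallel axiom, the terms with `h` to the left of `g` are,
up to the sign `(-1)^{(m-1)(p-1)}`, the terms of `(f ∘ h) ∘ g` with `g` to the right of `h`, and
vice versa; hence the associator is graded symmetric in `g` and `h`.
-/

lemma neg_one_pow_eq_of_cast_zmod_two {R : Type*} [Monoid R] [HasDistribNeg R] {a b : ℕ}
    (h : (a : ZMod 2) = b) : (-1 : R) ^ a = (-1) ^ b :=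
  neg_one_pow_congr <| by
    rw [← ZMod.natCast_eq_zero_iff_even, ← ZMod.natCast_eq_zero_iff_even, h]

namespace NSOperad

variable (O : NSOperad k A)

lemma sum_comp {ι : Type*} (s : Finset ι) (F : ι → A) (g : A) (i : ℕ) :
    O.comp (∑ a ∈ s, F a) g i = ∑ a ∈ s, O.comp (F a) g i :=
  map_sum (AddMonoidHom.mk' (O.comp · g i) (O.comp_add_left · · g i)) F s

lemma comp_sum {ι : Type*} (s : Finset ι) (f : A) (G : ι → A) (i : ℕ) :
    O.comp f (∑ a ∈ s, G a) i = ∑ a ∈ s, O.comp f (G a) i :=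
  map_sum (AddMonoidHom.mk' (O.comp f · i) (O.comp_add_right f · · i)) G s

lemma zsmul_comp (c : ℤ) (f g : A) (i : ℕ) : O.comp (c • f) g i = c • O.comp f g i :=
  map_zsmul (AddMonoidHom.mk' (O.comp · g i) (O.comp_add_left · · g i)) c f

lemma comp_zsmul (c : ℤ) (f g : A) (i : ℕ) : O.comp f (c • g) i = c • O.comp f g i :=
  map_zsmul (AddMonoidHom.mk' (O.comp f · i) (O.comp_add_right f · · i)) c g

def associator (n m p : ℕ) (f g h : A) : A :=
  O.circle (n + m - 1) p (O.circle n m f g) h - O.circle n (m + p - 1) f (O.circle m p g h)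

/-- The summand `±(f ∘ᵢ g) ∘ⱼ h` of `(f ∘ g) ∘ h`, indexed by `q = (j, i)`. -/
def nestedTerm (m p : ℕ) (f g h : A) (q : ℕ × ℕ) : A :=
  ((-1 : ℤ) ^ ((q.1 + 1) * (p + 1) + (q.2 + 1) * (m + 1))) • O.comp (O.comp f g q.2) h q.1

lemma circle_circle_eq_sum_nestedTerm (n m p : ℕ) (f g h : A) :
    O.circle (n + m - 1) p (O.circle n m f g) h
      = ∑ q ∈ Icc 1 (n + m - 1) ×ˢ Icc 1 n, O.nestedTerm m p f g h q := by
  simp only [circle, nestedTerm, sum_comp, zsmul_comp, smul_sum, smul_smul, ← pow_add,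
    sum_product]

lemma circle_circle_eq_sum_comp_comp (n m p : ℕ) (f g h : A) :
    O.circle n (m + p - 1) f (O.circle m p g h)
      = ∑ q ∈ Icc 1 n ×ˢ Icc 1 m,
          ((-1 : ℤ) ^ ((q.1 + 1) * (m + p - 1 + 1) + (q.2 + 1) * (p + 1))) •
            O.comp f (O.comp g h q.2) q.1 := by
  simp only [circle, comp_sum, comp_zsmul, smul_sum, smul_smul, ← pow_add, sum_product]

variable {O} {n m p : ℕ} {f g h : A}

lemma sum_nestedTerm_nested (hf : f ∈ O.piece n) (hg : g ∈ O.piece m) (hh : h ∈ O.piece p) :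
    ∑ q ∈ (Icc 1 (n + m - 1) ×ˢ Icc 1 n).filter (fun q => q.2 ≤ q.1 ∧ q.1 < m + q.2),
        O.nestedTerm m p f g h q
      = O.circle n (m + p - 1) f (O.circle m p g h) := by
  rw [circle_circle_eq_sum_comp_comp]
  refine sum_nbij' (fun q => (q.2, q.1 + 1 - q.2)) (fun q => (q.1 + q.2 - 1, q.1))
    ?_ ?_ ?_ ?_ ?_ <;> rintro ⟨j, i⟩ hq <;> simp only [mem_filter, mem_product, mem_Icc,
      Prod.mk.injEq, and_true, true_and] at hq ⊢
  · omega
  · omega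
  · omega
  · omega
  obtain ⟨⟨-, hi, -⟩, hij, hjm⟩ := hq
  obtain ⟨d, rfl⟩ : ∃ d, j = i + d := ⟨j - i, by omega⟩
  rw [nestedTerm, O.assoc₂ hf hg hh i (i + d) hi (by omega) hjm,
    show i + d - i + 1 = i + d + 1 - i by omega, show m + p - 1 + 1 = m + p by omega]
  congr 1
  refine neg_one_pow_eq_of_cast_zmod_two ?_
  rw [show i + d + 1 - i = d + 1 by omega]
  push_cast
  generalize (i : ZMod 2) = a, (d : ZMod 2) = b, (m : ZMod 2) = c, (p : ZMod 2) = e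
  revert a b c e
  decide

lemma sum_nestedTerm_left (hf : f ∈ O.piece n) (hg : g ∈ O.piece m) (hh : h ∈ O.piece p) :
    ∑ q ∈ (Icc 1 (n + m - 1) ×ˢ Icc 1 n).filter (fun q => q.1 < q.2), O.nestedTerm m p f g h q
      = ((-1 : ℤ) ^ ((m + 1) * (p + 1))) •
          ∑ q ∈ (Icc 1 (n + p - 1) ×ˢ Icc 1 n).filter (fun q => p + q.2 ≤ q.1),
            O.nestedTerm p m f h g q := by
  rw [smul_sum]
  refine sum_nbij' (fun q => (q.2 + p - 1, q.1)) (fun q => (q.2, q.1 + 1 - p))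
    ?_ ?_ ?_ ?_ ?_ <;> rintro ⟨j, i⟩ hq <;> simp only [mem_filter, mem_product, mem_Icc,
      Prod.mk.injEq, and_true, true_and] at hq ⊢
  · omega
  · omega
  · omega
  · omega
  obtain ⟨⟨⟨hj, -⟩, -, hin⟩, hji⟩ := hq
  rw [nestedTerm, nestedTerm, O.assoc₁ hf hg hh i j hj hji hin, smul_smul, ← pow_add,
    show i + p - 1 + 1 = i + p by omega]
  congr 1
  refine neg_one_pow_eq_of_cast_zmod_two ?_
  push_cast
  generalize (i : ZMod 2) = a, (j : ZMod 2) = b, (m : ZMod 2) = c, (p : ZMod 2) = e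
  revert a b c e
  decide

lemma associator_eq_sum_left_add_sum_right (hf : f ∈ O.piece n) (hg : g ∈ O.piece m)
    (hh : h ∈ O.piece p) :
    O.associator n m p f g h
      = ∑ q ∈ (Icc 1 (n + m - 1) ×ˢ Icc 1 n).filter (fun q => q.1 < q.2),
          O.nestedTerm m p f g h q
        + ∑ q ∈ (Icc 1 (n + m - 1) ×ˢ Icc 1 n).filter (fun q => m + q.2 ≤ q.1),
          O.nestedTerm m p f g h q := by
  set s := Icc 1 (n + m - 1) ×ˢ Icc 1 n
  have hsplit : ∑ q ∈ s.filter (fun q => ¬ q.1 < q.2), O.nestedTerm m p f g h q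
      = ∑ q ∈ s.filter (fun q => q.2 ≤ q.1 ∧ q.1 < m + q.2), O.nestedTerm m p f g h q
        + ∑ q ∈ s.filter (fun q => m + q.2 ≤ q.1), O.nestedTerm m p f g h q := by
    rw [← sum_filter_add_sum_filter_not _ (fun q => q.1 < m + q.2), filter_filter, filter_filter]
    congr 1 <;> exact sum_congr (filter_congr fun q _ => by omega) fun _ _ => rfl
  rw [associator, circle_circle_eq_sum_nestedTerm, ← sum_nestedTerm_nested hf hg hh,
    ← sum_filter_add_sum_filter_not s (fun q => q.1 < q.2), hsplit]
  abel

end NSOperad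

/-- the circle product on a non-symmetric unital operad satisfies the
graded (right) pre-Lie identity. -/
theorem circle_preLie (O : NSOperad k A) {n m p : ℕ} {f g h : A}
    (hf : f ∈ O.piece n) (hg : g ∈ O.piece m) (hh : h ∈ O.piece p) :
    O.circle (n + m - 1) p (O.circle n m f g) h - O.circle n (m + p - 1) f (O.circle m p g h)
      = ((-1 : ℤ) ^ ((m + 1) * (p + 1))) •
        (O.circle (n + p - 1) m (O.circle n p f h) g
          - O.circle n (p + m - 1) f (O.circle p m h g)) := by
  change O.associator n m p f g h = _ • O.associator n p m f h g
  rw [O.associator_eq_sum_left_add_sum_right hf hg hh,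
    O.associator_eq_sum_left_add_sum_right hf hh hg,
    O.sum_nestedTerm_left hf hg hh, O.sum_nestedTerm_left hf hh hg, smul_add, smul_smul,
    ← pow_add, mul_comm (p + 1), Even.neg_one_pow ⟨_, rfl⟩, one_smul, add_comm]
end

section
/- In a non-symmetric unital operad O, the bracket [f,g] := f ∘ g − (-1)^{(n-1)(m-1)} g ∘ f (where ∘ is the circle product built from the partial compositions) defines a graded Lie bracket of degree −1 on ⊕_{n≥1} O^n: it is graded antisymmetric with respect to the shifted degrees and satisfies the graded Jacobi identity. -/
open Finset

variable {k A : Type} [CommRing k] [AddCommGroup A] [Module k A]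

/-- The degree `-1` bracket `[f,g] = f ∘ g - (-1)^{(n-1)(m-1)} g ∘ f` for `f ∈ O^n`, `g ∈ O^m`. -/
def NSOperad.bracket (O : NSOperad k A) (n m : ℕ) (f g : A) : A :=
  O.circle n m f g - ((-1 : ℤ) ^ ((n + 1) * (m + 1))) • O.circle m n g f

/-!
Write `f ∘ g` for the circle product. Expanding `(f ∘ g) ∘ h` by the partial compositions, the
terms in which `h` is plugged into an input of `g` are exactly those of `f ∘ (g ∘ h)` (sequential
associativity). So the associator `(f ∘ g) ∘ h - f ∘ (g ∘ h)` is the signed sum of the composites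
in which `g` and `h` are plugged into two distinct inputs of `f`, and by parallel associativity
this sum is graded symmetric in `g` and `h`: `∘` is a graded pre-Lie product. The Jacobi identity
for the graded commutator of a graded pre-Lie product is then a formal consequence.
-/

lemma neg_one_pow_add_sub_one_mul {n m : ℕ} (hn : 1 ≤ n) (hm : 1 ≤ m) (p : ℕ) :
    (-1 : ℤ) ^ ((n + m - 1 + 1) * (p + 1)) =
      (-1) ^ ((n + 1) * (p + 1)) * (-1) ^ ((m + 1) * (p + 1)) := by
  rw [← pow_add, show n + m - 1 + 1 = n + m by omega]
  exact neg_one_pow_congr <| Nat.even_add.mp ⟨(p + 1) * (n + m + 1), by ring⟩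

namespace NSOperad

variable (O : NSOperad k A)

def compₗ (i : ℕ) : A →ₗ[k] A →ₗ[k] A :=
  LinearMap.mk₂ k (fun f g => O.comp f g i) (fun f f' g => O.comp_add_left f f' g i)
    (fun c f g => O.comp_smul_left c f g i) (fun f g g' => O.comp_add_right f g g' i)
    (fun c f g => O.comp_smul_right c f g i)

@[simp]
lemma compₗ_apply (i : ℕ) (f g : A) : O.compₗ i f g = O.comp f g i := rfl

def circleₗ (n m : ℕ) : A →ₗ[k] A →ₗ[k] A :=
  ∑ i ∈ Icc 1 n, ((-1 : ℤ) ^ ((i + 1) * (m + 1))) • O.compₗ i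

lemma circleₗ_apply (n m : ℕ) (f g : A) : O.circleₗ n m f g = O.circle n m f g := by
  simp only [circleₗ, circle, LinearMap.sum_apply, LinearMap.smul_apply, compₗ_apply]

lemma comp_sum_left {ι : Type*} (s : Finset ι) (F : ι → A) (g : A) (i : ℕ) :
    O.comp (∑ x ∈ s, F x) g i = ∑ x ∈ s, O.comp (F x) g i := by
  simp only [← compₗ_apply, map_sum, LinearMap.sum_apply]

lemma comp_sum_right {ι : Type*} (s : Finset ι) (f : A) (F : ι → A) (i : ℕ) :
    O.comp f (∑ x ∈ s, F x) i = ∑ x ∈ s, O.comp f (F x) i := by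
  simp only [← compₗ_apply, map_sum]

lemma comp_zsmul_left (z : ℤ) (f g : A) (i : ℕ) : O.comp (z • f) g i = z • O.comp f g i := by
  simp only [← compₗ_apply, map_zsmul, LinearMap.smul_apply]

lemma comp_zsmul_right (z : ℤ) (f g : A) (i : ℕ) : O.comp f (z • g) i = z • O.comp f g i := by
  simp only [← compₗ_apply, map_zsmul]

lemma circle_sub_left (n m : ℕ) (x y g : A) :
    O.circle n m (x - y) g = O.circle n m x g - O.circle n m y g := by
  simp only [← circleₗ_apply, map_sub, LinearMap.sub_apply]

lemma circle_sub_right (n m : ℕ) (f x y : A) :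
    O.circle n m f (x - y) = O.circle n m f x - O.circle n m f y := by
  simp only [← circleₗ_apply, map_sub]

lemma circle_zsmul_left (n m : ℕ) (z : ℤ) (x g : A) :
    O.circle n m (z • x) g = z • O.circle n m x g := by
  simp only [← circleₗ_apply, map_zsmul, LinearMap.smul_apply]

lemma circle_zsmul_right (n m : ℕ) (z : ℤ) (f x : A) :
    O.circle n m f (z • x) = z • O.circle n m f x := by
  simp only [← circleₗ_apply, map_zsmul]

lemma circle_circle_left (n m p : ℕ) (f g h : A) :
    O.circle (n + m - 1) p (O.circle n m f g) h =
      ∑ i ∈ Icc 1 n, ∑ j ∈ Icc 1 (n + m - 1),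
        ((-1 : ℤ) ^ ((i + 1) * (m + 1) + (j + 1) * (p + 1))) • O.comp (O.comp f g i) h j := by
  rw [Finset.sum_comm]
  simp only [circle, comp_sum_left, comp_zsmul_left, Finset.smul_sum, smul_smul, ← pow_add,
    add_comm]

lemma circle_circle_right (n m p : ℕ) (f g h : A) :
    O.circle n (m + p - 1) f (O.circle m p g h) =
      ∑ i ∈ Icc 1 n, ∑ t ∈ Icc 1 m,
        ((-1 : ℤ) ^ ((i + 1) * (m + p - 1 + 1) + (t + 1) * (p + 1))) •
          O.comp f (O.comp g h t) i := by
  simp only [circle, comp_sum_right, comp_zsmul_right, Finset.smul_sum, smul_smul, ← pow_add]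

/-- The degrees `d`, `d'` are free so that e.g. `m + n - 1` can be matched against `n + m - 1`. -/
lemma circle_circle_eq_associator_add {n m p d d' : ℕ} (hd : d = n + m - 1)
    (hd' : d' = m + p - 1) (f g h : A) :
    O.circle d p (O.circle n m f g) h =
      O.associator n m p f g h + O.circle n d' f (O.circle m p g h) := by
  subst hd hd'
  rw [associator, sub_add_cancel]

def disjointComp (n m p : ℕ) (f g h : A) : A :=
  ∑ b ∈ Icc 1 n, ∑ a ∈ Ico 1 b,
    ((-1 : ℤ) ^ ((b + 1) * (m + 1) + (a + 1) * (p + 1))) • O.comp (O.comp f g b) h a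

section Insertions

variable {O} {n m p i : ℕ} {f g h : A}

lemma sum_comp_comp_within_block (hf : f ∈ O.piece n) (hg : g ∈ O.piece m) (hh : h ∈ O.piece p)
    (hi : 1 ≤ i) (hm : 1 ≤ m) :
    ∑ j ∈ Ico i (i + m),
        ((-1 : ℤ) ^ ((i + 1) * (m + 1) + (j + 1) * (p + 1))) • O.comp (O.comp f g i) h j =
      ∑ t ∈ Icc 1 m,
        ((-1 : ℤ) ^ ((i + 1) * (m + p - 1 + 1) + (t + 1) * (p + 1))) •
          O.comp f (O.comp g h t) i := by
  rw [show Ico i (i + m) = Ico (1 + (i - 1)) (m + 1 + (i - 1)) by congr 1 <;> omega,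
    ← Finset.sum_Ico_add', ← Finset.Ico_add_one_right_eq_Icc]
  refine Finset.sum_congr rfl fun t ht => ?_
  rw [Finset.mem_Ico] at ht
  rw [O.assoc₂ hf hg hh i (t + (i - 1)) hi (by omega) (by omega),
    show t + (i - 1) - i + 1 = t by omega, show t + (i - 1) + 1 = i + t by omega,
    show m + p - 1 + 1 = m + p by omega]
  congr 1
  exact neg_one_pow_congr <|
    Nat.even_add.mp ⟨(i + 1) * (p + 1) + m * (i + 1) + t * (p + 1), by ring⟩

lemma sum_comp_comp_after_block (hf : f ∈ O.piece n) (hg : g ∈ O.piece m) (hh : h ∈ O.piece p)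
    (hi : 1 ≤ i) (hm : 1 ≤ m) :
    ∑ j ∈ Ico (i + m) (n + m),
        ((-1 : ℤ) ^ ((i + 1) * (m + 1) + (j + 1) * (p + 1))) • O.comp (O.comp f g i) h j =
      ∑ b ∈ Ico (i + 1) (n + 1),
        ((-1 : ℤ) ^ ((i + 1) * (m + 1) + (b + m) * (p + 1))) • O.comp (O.comp f h b) g i := by
  rw [show Ico (i + m) (n + m) = Ico (i + 1 + (m - 1)) (n + 1 + (m - 1)) by congr 1 <;> omega,
    ← Finset.sum_Ico_add']
  refine Finset.sum_congr rfl fun b hb => ?_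
  rw [Finset.mem_Ico] at hb
  rw [O.assoc₃ hf hg hh i (b + (m - 1)) hi (by omega) (by omega),
    show b + (m - 1) - m + 1 = b by omega, show b + (m - 1) + 1 = b + m by omega]

lemma associator_eq_disjointComp (hf : f ∈ O.piece n) (hg : g ∈ O.piece m)
    (hh : h ∈ O.piece p) (hm : 1 ≤ m) :
    O.associator n m p f g h =
      O.disjointComp n m p f g h +
        ((-1 : ℤ) ^ ((m + 1) * (p + 1))) • O.disjointComp n p m f h g := by
  have split : ∀ i ∈ Icc 1 n,
      ∑ j ∈ Icc 1 (n + m - 1),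
          ((-1 : ℤ) ^ ((i + 1) * (m + 1) + (j + 1) * (p + 1))) • O.comp (O.comp f g i) h j =
        ∑ j ∈ Ico 1 i,
            ((-1 : ℤ) ^ ((i + 1) * (m + 1) + (j + 1) * (p + 1))) • O.comp (O.comp f g i) h j +
          ∑ t ∈ Icc 1 m,
            ((-1 : ℤ) ^ ((i + 1) * (m + p - 1 + 1) + (t + 1) * (p + 1))) •
              O.comp f (O.comp g h t) i +
          ∑ b ∈ Ico (i + 1) (n + 1),
            ((-1 : ℤ) ^ ((i + 1) * (m + 1) + (b + m) * (p + 1))) • O.comp (O.comp f h b) g i := by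
    intro i hi
    rw [Finset.mem_Icc] at hi
    rw [← Finset.Ico_add_one_right_eq_Icc, show n + m - 1 + 1 = n + m by omega,
      ← Finset.sum_Ico_consecutive _ (show 1 ≤ i + m by omega) (show i + m ≤ n + m by omega),
      ← Finset.sum_Ico_consecutive _ hi.1 (show i ≤ i + m by omega),
      sum_comp_comp_within_block hf hg hh hi.1 hm, sum_comp_comp_after_block hf hg hh hi.1 hm]
  have hswap : ∑ i ∈ Icc 1 n, ∑ b ∈ Ico (i + 1) (n + 1),
      ((-1 : ℤ) ^ ((i + 1) * (m + 1) + (b + m) * (p + 1))) • O.comp (O.comp f h b) g i =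
        ((-1 : ℤ) ^ ((m + 1) * (p + 1))) • O.disjointComp n p m f h g := by
    rw [disjointComp, Finset.smul_sum, Finset.sum_comm' (t' := Icc 1 n) (s' := fun b => Ico 1 b)
      fun i b => by simp only [Finset.mem_Icc, Finset.mem_Ico]; omega]
    refine Finset.sum_congr rfl fun b _ => ?_
    rw [Finset.smul_sum]
    refine Finset.sum_congr rfl fun a _ => ?_
    rw [smul_smul, ← pow_add]
    congr 1
    exact neg_one_pow_congr <|
      Nat.even_add.mp ⟨(a + 1) * (m + 1) + (p + 1) * (b + m + 1), by ring⟩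
  rw [associator, circle_circle_left, circle_circle_right, Finset.sum_congr rfl split,
    Finset.sum_add_distrib, Finset.sum_add_distrib, hswap, add_right_comm, add_sub_cancel_right]
  rfl

lemma associator_swap (hf : f ∈ O.piece n) (hg : g ∈ O.piece m) (hh : h ∈ O.piece p)
    (hm : 1 ≤ m) (hp : 1 ≤ p) :
    O.associator n p m f h g = ((-1 : ℤ) ^ ((m + 1) * (p + 1))) • O.associator n m p f g h := by
  rw [associator_eq_disjointComp hf hh hg hp, associator_eq_disjointComp hf hg hh hm, smul_add,
    smul_smul, ← pow_add, Even.neg_one_pow ⟨_, rfl⟩, one_smul, Nat.mul_comm (p + 1), add_comm]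

end Insertions

lemma bracket_antisymm (n m : ℕ) (f g : A) :
    O.bracket n m f g = -(((-1 : ℤ) ^ ((n + 1) * (m + 1))) • O.bracket m n g f) := by
  rw [bracket, bracket, smul_sub, smul_smul, Nat.mul_comm (m + 1), ← pow_add,
    Even.neg_one_pow ⟨_, rfl⟩, one_smul, neg_sub]

lemma bracket_jacobi {n m p : ℕ} {f g h : A} (hn : 1 ≤ n) (hm : 1 ≤ m) (hp : 1 ≤ p)
    (hf : f ∈ O.piece n) (hg : g ∈ O.piece m) (hh : h ∈ O.piece p) :
    ((-1 : ℤ) ^ ((n + 1) * (p + 1))) • O.bracket (n + m - 1) p (O.bracket n m f g) h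
      + ((-1 : ℤ) ^ ((m + 1) * (n + 1))) • O.bracket (m + p - 1) n (O.bracket m p g h) f
      + ((-1 : ℤ) ^ ((p + 1) * (m + 1))) • O.bracket (p + n - 1) m (O.bracket p n h f) g
      = 0 := by
  -- Each `(x ∘ y) ∘ z` becomes an associator plus `x ∘ (y ∘ z)`: the six terms `x ∘ (y ∘ z)`
  -- cancel in pairs, as do the six associators by `associator_swap`, leaving an identity
  -- between polynomials in three signs `±1`.
  rw [show p + n - 1 = n + p - 1 by omega]
  simp only [bracket, circle_sub_left, circle_sub_right, circle_zsmul_left, circle_zsmul_right]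
  rw [O.circle_circle_eq_associator_add rfl rfl f g h,
    O.circle_circle_eq_associator_add (d := n + m - 1) (by omega) rfl g f h,
    O.circle_circle_eq_associator_add rfl (d' := n + p - 1) (by omega) g h f,
    O.circle_circle_eq_associator_add (d := m + p - 1) (d' := n + m - 1) (by omega) (by omega)
      h g f,
    O.circle_circle_eq_associator_add (d := n + p - 1) (by omega) rfl h f g,
    O.circle_circle_eq_associator_add rfl (d' := m + p - 1) (by omega) f h g,
    associator_swap hf hg hh hm hp, associator_swap hg hh hf hp hn, associator_swap hh hf hg hn hm,
    neg_one_pow_add_sub_one_mul hn hm, neg_one_pow_add_sub_one_mul hm hp,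
    neg_one_pow_add_sub_one_mul hn hp, Nat.mul_comm (m + 1) (n + 1),
    Nat.mul_comm (p + 1) (n + 1), Nat.mul_comm (p + 1) (m + 1)]
  rcases neg_one_pow_eq_or ℤ ((n + 1) * (m + 1)) with ha | ha <;>
  rcases neg_one_pow_eq_or ℤ ((m + 1) * (p + 1)) with hb | hb <;>
  rcases neg_one_pow_eq_or ℤ ((n + 1) * (p + 1)) with hc | hc <;>
  simp only [ha, hb, hc] <;> module

end NSOperad

/-- on `⊕_{n ≥ 1} O^n` the bracket `[f,g]` is graded antisymmetric for the
shifted degrees and satisfies the graded Jacobi identity, i.e. it is a graded Lie bracket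
of degree `-1`. -/
theorem bracket_gradedLie (O : NSOperad k A) {n m p : ℕ} {f g h : A}
    (hn : 1 ≤ n) (hm : 1 ≤ m) (hp : 1 ≤ p)
    (hf : f ∈ O.piece n) (hg : g ∈ O.piece m) (hh : h ∈ O.piece p) :
    (O.bracket n m f g = -(((-1 : ℤ) ^ ((n + 1) * (m + 1))) • O.bracket m n g f)) ∧
    (((-1 : ℤ) ^ ((n + 1) * (p + 1))) • O.bracket (n + m - 1) p (O.bracket n m f g) h
      + ((-1 : ℤ) ^ ((m + 1) * (n + 1))) • O.bracket (m + p - 1) n (O.bracket m p g h) f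
      + ((-1 : ℤ) ^ ((p + 1) * (m + 1))) • O.bracket (p + n - 1) m (O.bracket p n h f) g
      = 0) :=
  ⟨O.bracket_antisymm n m f g, O.bracket_jacobi hn hm hp hf hg hh⟩
end

section
/- The simplicial boundary b = Σ_{i=0}^{p} (-1)^i d_i on the secondary Hochschild chain complex C̄_•(A,B,ε) squares to zero: b ∘ b = 0. -/
open Finset

variable {k A B : Type} [CommRing k] [Ring A] [Algebra k A] [CommRing B] [Algebra k B]

/-- A (set-level) secondary Hochschild `n`-cochain for a triple `(A, B, ε)`: a function of
the entries of an upper-triangular matrix with diagonal `a 1, …, a n ∈ A` and strictly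
upper entries `b s t ∈ B` (`1 ≤ s < t ≤ n`).  Elements of
`C^n((A,B,ε);A) = Hom_k(A^{⊗n} ⊗ B^{⊗ n(n-1)/2}, A)` are determined by such functions. -/
abbrev SecCochain (A B : Type) := (ℕ → A) → (ℕ → ℕ → B) → A

/-- The preimage, under collapsing the block `[i, i+m-1]` to the single index `i`, of an
index `s`; used to contract the `B`-entries crossing an inserted block. -/
def preB (i m s : ℕ) : Finset ℕ :=
  if s < i then {s} else if s = i then Finset.Icc i (i + m - 1) else {s + m - 1}

/-- Staic's operadic insertion `f ∘ᵢ g` on secondary Hochschild cochains, where `g` has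
degree `m`: `g` is evaluated on the `m × m` block starting at slot `i` and the crossing
`B`-entries are multiplied. -/
def compC (m i : ℕ) (f g : SecCochain A B) : SecCochain A B := fun a b =>
  f (fun s => if s < i then a s
      else if s = i then g (fun u => a (u + i - 1)) (fun u v => b (u + i - 1) (v + i - 1))
      else a (s + m - 1))
    (fun s t => ∏ u ∈ preB i m s, ∏ v ∈ preB i m t, b u v)

/-- The multiplication `μ(a₁ ⊗ b ⊗ a₂) = ε(b) a₁ a₂` as a secondary Hochschild 2-cochain. -/
def muC (ε : B →ₐ[k] A) : SecCochain A B := fun a b => ε (b 1 2) * (a 1 * a 2)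

/-- A generator of the secondary Hochschild chain module
`C̄_p(A,B,ε) = A^{⊗(p+1)} ⊗ B^{⊗ p(p+1)/2}`: an upper-triangular matrix with diagonal
`a 0, …, a p ∈ A` and strictly upper entries `b s t ∈ B` (`0 ≤ s < t ≤ p`). -/
abbrev SecChain (A B : Type) := (ℕ → A) × (ℕ → ℕ → B)

/-- Two chain generators represent the same element of `C̄_p(A,B,ε)` iff their diagonal
entries agree for indices `≤ p` and their strictly upper entries agree for
`s < t ≤ p` (out-of-range values are irrelevant junk). -/
def EqUpTo (p : ℕ) (T T' : SecChain A B) : Prop :=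
  (∀ s : ℕ, s ≤ p → T.1 s = T'.1 s) ∧
  (∀ s t : ℕ, s < t → t ≤ p → T.2 s t = T'.2 s t)

/-- The cyclic operator `t : M_p → M_p` on secondary Hochschild chains: the diagonal
becomes `(a_p, a_0, …, a_{p-1})`, the new first row is `b_{0,p}, b_{1,p}, …, b_{p-1,p}`,
and the remaining entries are shifted: `b'_{s,t} = b_{s-1,t-1}`. -/
def cycC (p : ℕ) (T : SecChain A B) : SecChain A B :=
  (fun s => if s = 0 then T.1 p else T.1 (s - 1),
   fun s t => if s = 0 then T.2 (t - 1) p else T.2 (s - 1) (t - 1))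

/-- The comp module action `f •ᵢ T` of a degree `m` secondary cochain on secondary chains:
`f` is evaluated on the block with diagonal `a_i, …, a_{i+m-1}` (inserted at slot `i`) and
the crossing `B`-entries are multiplied. -/
def chainAct (m i : ℕ) (f : SecCochain A B) (T : SecChain A B) : SecChain A B :=
  (fun s => if s < i then T.1 s
      else if s = i then
        f (fun u => T.1 (i + u - 1)) (fun u v => T.2 (i + u - 1) (i + v - 1))
      else T.1 (s + m - 1),
   fun s t => ∏ u ∈ preB i m s, ∏ v ∈ preB i m t, T.2 u v)

/-- A set-level cochain genuinely lies in `C^m((A,B,ε);A)` only if it depends on the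
matrix entries `a_u` (`1 ≤ u ≤ m`) and `b_{u,v}` (`1 ≤ u < v ≤ m`) alone. -/
def SecDependsOn (m : ℕ) (f : SecCochain A B) : Prop :=
  ∀ (a a' : ℕ → A) (b b' : ℕ → ℕ → B),
    (∀ u : ℕ, 1 ≤ u → u ≤ m → a u = a' u) →
    (∀ u v : ℕ, 1 ≤ u → u < v → v ≤ m → b u v = b' u v) →
    f a b = f a' b'

/-- The `i`-th face of Staic's secondary Hochschild boundary `∂` on
`C̄_p(A,B,ε) → C̄_{p-1}(A,B,ε)`: for `i < p` it merges the diagonal entries `a_i, a_{i+1}`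
into `ε(b_{i,i+1}) a_i a_{i+1}` and multiplies the corresponding `B`-entries; for `i = p`
it produces `ε(b_{0,p}) a_p a_0` in position `0` with first-row entries `b_{t,p} b_{0,t}`. -/
def staicFace (ε : B →ₐ[k] A) (p i : ℕ) (T : SecChain A B) : SecChain A B :=
  if i < p then
    (fun s => if s < i then T.1 s
        else if s = i then ε (T.2 i (i + 1)) * (T.1 i * T.1 (i + 1))
        else T.1 (s + 1),
     fun s t => ∏ u ∈ preB i 2 s, ∏ v ∈ preB i 2 t, T.2 u v)
  else
    (fun s => if s = 0 then ε (T.2 0 p) * (T.1 p * T.1 0) else T.1 s,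
     fun s t => if s = 0 then T.2 t p * T.2 0 t else T.2 s t)

/-- Generators of `C̄_p(A,B,ε)` up to the identification of in-range entries. -/
def chainSetoid (A B : Type) (p : ℕ) : Setoid (SecChain A B) :=
  ⟨EqUpTo p,
   ⟨fun _ => ⟨fun _ _ => rfl, fun _ _ _ _ => rfl⟩,
    fun h => ⟨fun s hs => (h.1 s hs).symm, fun s t h1 h2 => (h.2 s t h1 h2).symm⟩,
    fun h h' => ⟨fun s hs => (h.1 s hs).trans (h'.1 s hs),
      fun s t h1 h2 => (h.2 s t h1 h2).trans (h'.2 s t h1 h2)⟩⟩⟩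

/-- The set of elements of `C̄_p(A,B,ε)` represented by generators. -/
def QChain (A B : Type) (p : ℕ) := Quotient (chainSetoid A B p)

/-- The secondary Hochschild boundary `∂ = ∑_{i=0}^{p} (-1)^i dᵢ` of a generator of
`C̄_p(A,B,ε)`, as a formal `k`-linear combination of generators of `C̄_{p-1}(A,B,ε)`. -/
noncomputable def bndC (ε : B →ₐ[k] A) (p : ℕ) (T : SecChain A B) : QChain A B (p - 1) →₀ k :=
  ∑ i ∈ Finset.range (p + 1),
    Finsupp.single (Quotient.mk (chainSetoid A B (p - 1)) (staicFace ε p i T)) ((-1 : k) ^ i)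

/-!
The faces satisfy the simplicial identities `d_j ∘ d_{i+1} = d_i ∘ d_j` for `j ≤ i`, checked
entrywise on the upper-triangular matrix. Off the diagonal both sides multiply the same
`B`-entries in different orders. On the diagonal the only nontrivial entry is one merged twice,
where both sides equal `ε(b b' b'') x y z` because `ε` is multiplicative with central image; this
also covers the cyclic face `d_p`, which merges `a_p` with `a_0`. The terms of `b ∘ b` then cancel
in pairs under `(i, j) ↦ (j, i - 1)` for `j < i`, as for any semi-simplicial object.
-/

theorem alternating_double_sum_eq_zero {R M : Type*} [Ring R] [AddCommGroup M] [Module R M]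
    (n : ℕ) (x : ℕ → ℕ → M) (hx : ∀ i j, j ≤ i → i ≤ n → x (i + 1) j = x j i) :
    ∑ i ∈ range (n + 2), (-1 : R) ^ i • ∑ j ∈ range (n + 1), (-1 : R) ^ j • x i j = 0 := by
  simp only [smul_sum, smul_smul, ← pow_add]
  rw [← sum_product']
  refine sum_involution (fun ij _ => if ij.2 < ij.1 then (ij.2, ij.1 - 1) else (ij.2 + 1, ij.1))
    ?_ ?_ ?_ ?_
  · rintro ⟨i, j⟩ hij
    simp only [mem_product, mem_range] at hij
    by_cases h : j < i
    · obtain ⟨i, rfl⟩ : ∃ i', i = i' + 1 := ⟨i - 1, by omega⟩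
      simp only [h, if_true, Nat.add_sub_cancel, hx i j (by omega) (by omega)]
      rw [← add_smul, show i + 1 + j = j + i + 1 by omega, pow_succ]
      simp
    · simp only [h, if_false, ← hx j i (by omega) (by omega)]
      rw [← add_smul, show j + 1 + i = i + j + 1 by omega, pow_succ]
      simp
  · rintro ⟨i, j⟩ _ _
    split_ifs <;> simp only [ne_eq, Prod.mk.injEq] <;> omega
  · rintro ⟨i, j⟩ hij
    simp only [mem_product, mem_range] at hij ⊢
    split_ifs <;> omega
  · rintro ⟨i, j⟩ _
    dsimp only
    split_ifs <;> dsimp only at * <;> ext <;> dsimp only <;> omega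

theorem mul_assoc_twisted {F R S : Type*} [Semigroup R] [CommSemigroup S] [FunLike F S R]
    [MulHomClass F S R] (ε : F) (hε : ∀ (b : S) (a : R), ε b * a = a * ε b)
    (b₁ b₂ b₃ : S) (x y z : R) :
    ε (b₁ * b₂) * (x * (ε b₃ * (y * z))) = ε (b₂ * b₃) * (ε b₁ * (x * y) * z) := by
  calc ε (b₁ * b₂) * (x * (ε b₃ * (y * z))) = ε (b₁ * b₂ * b₃) * (x * (y * z)) := by
        rw [← mul_assoc x (ε b₃), ← hε b₃ x, map_mul ε _ b₃]; simp only [mul_assoc]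
    _ = ε (b₂ * b₃ * b₁) * (x * (y * z)) := by rw [mul_rotate]
    _ = ε (b₂ * b₃) * (ε b₁ * (x * y) * z) := by rw [map_mul ε _ b₁]; simp only [mul_assoc]

lemma prod_preB_of_lt {M : Type*} [CommMonoid M] {i m s : ℕ} (h : s < i) (f : ℕ → M) :
    ∏ u ∈ preB i m s, f u = f s := by
  rw [preB, if_pos h, prod_singleton]

lemma prod_preB_two_self {M : Type*} [CommMonoid M] {i s : ℕ} (h : s = i) (f : ℕ → M) :
    ∏ u ∈ preB i 2 s, f u = f i * f (i + 1) := by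
  subst h
  rw [preB, if_neg (lt_irrefl s), if_pos rfl, show s + 2 - 1 = s + 1 by omega,
    prod_Icc_succ_top (by omega), Icc_self, prod_singleton]

lemma prod_preB_two_of_gt {M : Type*} [CommMonoid M] {i s : ℕ} (h : i < s) (f : ℕ → M) :
    ∏ u ∈ preB i 2 s, f u = f (s + 1) := by
  rw [preB, if_neg (by omega), if_neg (by omega), prod_singleton]
  rfl

theorem staicFace_comm_of_lt (ε : B →ₐ[k] A) (hε : ∀ (b : B) (a : A), ε b * a = a * ε b)
    {p i j : ℕ} (hji : j ≤ i) (hip : i < p + 1) (T : SecChain A B) :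
    EqUpTo p (staicFace ε (p + 1) j (staicFace ε (p + 2) (i + 1) T))
      (staicFace ε (p + 1) i (staicFace ε (p + 2) j T)) := by
  constructor
  · intro s hs
    simp (disch := omega) only [staicFace, if_pos, if_neg]
    rcases lt_trichotomy s j with hsj | rfl | hsj <;> rcases lt_trichotomy s i with hsi | rfl | hsi <;>
      simp (disch := omega) only [if_pos, if_neg, ite_true, prod_preB_of_lt, prod_preB_two_self,
        prod_preB_two_of_gt]
    exact mul_assoc_twisted ε hε _ _ _ _ _ _
  · intro s t hst htp
    simp (disch := omega) only [staicFace, if_pos, if_neg]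
    rcases lt_trichotomy s j with hsj | hsj | hsj <;>
      rcases lt_trichotomy s i with hsi | hsi | hsi <;>
      rcases lt_trichotomy t j with htj | htj | htj <;>
      rcases lt_trichotomy t i with hti | hti | hti <;>
      first
      | omega
      | (subst_vars
         simp (disch := omega) only [prod_preB_of_lt, prod_preB_two_self, prod_preB_two_of_gt]
           <;> ring1)

theorem staicFace_comm_last_of_lt (ε : B →ₐ[k] A) (hε : ∀ (b : B) (a : A), ε b * a = a * ε b)
    {p j : ℕ} (hjp : j < p + 1) (T : SecChain A B) :
    EqUpTo p (staicFace ε (p + 1) j (staicFace ε (p + 2) (p + 2) T))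
      (staicFace ε (p + 1) (p + 1) (staicFace ε (p + 2) j T)) := by
  constructor
  · intro s hs
    simp (disch := omega) only [staicFace, if_pos, if_neg]
    rcases lt_trichotomy s j with hsj | hsj | hsj <;>
      rcases eq_or_ne s 0 with hs0 | hs0 <;>
      rcases eq_or_ne j 0 with hj0 | hj0 <;>
      first
      | omega
      | (subst_vars
         simp (disch := omega) only [if_pos, if_neg, ite_true, prod_preB_of_lt,
           prod_preB_two_self, prod_preB_two_of_gt]
           <;> exact (mul_assoc_twisted ε hε _ _ _ _ _ _).symm)
  · intro s t hst htp
    simp (disch := omega) only [staicFace, if_pos, if_neg]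
    rcases lt_trichotomy s j with hsj | hsj | hsj <;>
      rcases lt_trichotomy t j with htj | htj | htj <;>
      rcases eq_or_ne s 0 with hs0 | hs0 <;>
      rcases eq_or_ne j 0 with hj0 | hj0 <;>
      first
      | omega
      | (subst_vars
         simp (disch := omega) only [if_neg, ite_true, prod_preB_of_lt, prod_preB_two_self,
           prod_preB_two_of_gt]
           <;> ring1)

theorem staicFace_comm_last_last (ε : B →ₐ[k] A) (hε : ∀ (b : B) (a : A), ε b * a = a * ε b)
    (p : ℕ) (T : SecChain A B) :
    EqUpTo p (staicFace ε (p + 1) (p + 1) (staicFace ε (p + 2) (p + 2) T))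
      (staicFace ε (p + 1) (p + 1) (staicFace ε (p + 2) (p + 1) T)) := by
  constructor
  · intro s hs
    simp (disch := omega) only [staicFace, if_pos, if_neg]
    rcases eq_or_ne s 0 with hs0 | hs0
    · subst hs0
      simp (disch := omega) only [if_pos, ite_true, prod_preB_of_lt, prod_preB_two_self]
      exact mul_assoc_twisted ε hε _ _ _ _ _ _
    · simp (disch := omega) only [if_pos, if_neg, prod_preB_of_lt]
  · intro s t hst htp
    simp (disch := omega) only [staicFace, if_pos, if_neg]
    rcases eq_or_ne s 0 with hs0 | hs0 <;>
      simp (disch := omega) only [if_pos, if_neg, ite_true, prod_preB_of_lt, prod_preB_two_self]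
    ring1

theorem staicFace_comm (ε : B →ₐ[k] A) (hε : ∀ (b : B) (a : A), ε b * a = a * ε b)
    {p i j : ℕ} (hji : j ≤ i) (hi : i ≤ p + 1) (T : SecChain A B) :
    EqUpTo p (staicFace ε (p + 1) j (staicFace ε (p + 2) (i + 1) T))
      (staicFace ε (p + 1) i (staicFace ε (p + 2) j T)) := by
  rcases hi.lt_or_eq with hip | rfl
  · exact staicFace_comm_of_lt ε hε hji hip T
  rcases hji.lt_or_eq with hjp | rfl
  · exact staicFace_comm_last_of_lt ε hε hjp T
  · exact staicFace_comm_last_last ε hε p T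

lemma bndC_eq_sum (ε : B →ₐ[k] A) (p : ℕ) (T : SecChain A B) :
    bndC ε p T = ∑ i ∈ range (p + 1),
      (-1 : k) ^ i • Finsupp.single (⟦staicFace ε p i T⟧ : QChain A B (p - 1)) 1 := by
  simp only [bndC, Finsupp.smul_single_one]
  rfl

/-- the simplicial boundary `b = ∑_{i=0}^p (-1)^i dᵢ` of the secondary
Hochschild chain complex `C̄_•(A,B,ε)` squares to zero. -/
theorem secondary_boundary_squared_zero (ε : B →ₐ[k] A)
    (hcent : ∀ (b : B) (a : A), ε b * a = a * ε b) (p : ℕ) (T : SecChain A B) :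
    ∑ i ∈ Finset.range (p + 3),
        ((-1 : k) ^ i) • bndC ε (p + 1) (staicFace ε (p + 2) i T) = 0 := by
  simp only [bndC_eq_sum]
  exact alternating_double_sum_eq_zero (p + 1) _
    fun i j hji hi => by rw [Quotient.sound (staicFace_comm ε hcent hji hi T)]
end

section
/- Let M be a cyclic unital comp module over a multiplicative operad (O, μ). The cap product i_f(x) := (μ ∘_2 f) •_0 x satisfies i_f i_g = i_{f ⌣ g} for all f ∈ O^m, g ∈ O^n, where f ⌣ g = (μ ∘_2 f) ∘_1 g. -/
open Finset

variable {k A : Type} [CommRing k] [AddCommGroup A] [Module k A]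

/-- A unital (left) comp module over a non-symmetric operad `O`, presented with an ambient
module `M` whose graded pieces `piece p` play the role of `M_p`, with action maps
`act f x i` (denoted `f •ᵢ x`), allowing the extra index `i = 0` of a para-cyclic structure. -/
structure CompModule (O : NSOperad k A) (M : Type) [AddCommGroup M] [Module k M] where
  piece : ℕ → Submodule k M
  act : A → M → ℕ → M
  act_mem : ∀ {m p : ℕ} {f : A} {x : M}, f ∈ O.piece m → x ∈ piece p → ∀ i : ℕ,
      act f x i ∈ piece (p - m + 1)
  act_add_left : ∀ (f f' : A) (x : M) (i : ℕ), act (f + f') x i = act f x i + act f' x i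
  act_add_right : ∀ (f : A) (x y : M) (i : ℕ), act f (x + y) i = act f x i + act f y i
  act_smul_left : ∀ (c : k) (f : A) (x : M) (i : ℕ), act (c • f) x i = c • act f x i
  act_smul_right : ∀ (c : k) (f : A) (x : M) (i : ℕ), act f (c • x) i = c • act f x i
  rel₁ : ∀ {m n p : ℕ} {f g : A} {x : M}, f ∈ O.piece m → g ∈ O.piece n → x ∈ piece p →
      ∀ i j : ℕ, j < i → act f (act g x j) i = act g (act f x (i + n - 1)) j
  rel₂ : ∀ {m n p : ℕ} {f g : A} {x : M}, f ∈ O.piece m → g ∈ O.piece n → x ∈ piece p →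
      ∀ i j : ℕ, (j : ℤ) - m < i → i ≤ j →
      act f (act g x j) i = act (O.comp f g (j - i + 1)) x i
  rel₃ : ∀ {m n p : ℕ} {f g : A} {x : M}, f ∈ O.piece m → g ∈ O.piece n → x ∈ piece p →
      ∀ i j : ℕ, (i : ℤ) ≤ (j : ℤ) - m → act f (act g x j) i = act g (act f x i) (j - m + 1)
  unital : ∀ {p : ℕ} {x : M}, x ∈ piece p → ∀ i : ℕ, i ≤ p → act O.one x i = x

/-- A cyclic unital comp module over an operad `O`: a unital comp module (with the extra
index-`0` actions) together with a cyclic operator `t : M_p → M_p` satisfying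
`t^{p+1} = id` and `t(f •ᵢ x) = f •ᵢ₊₁ t(x)`. -/
structure CyclicCompModule (O : NSOperad k A) (M : Type) [AddCommGroup M] [Module k M]
    extends CompModule O M where
  cyc : M → M
  cyc_add : ∀ x y : M, cyc (x + y) = cyc x + cyc y
  cyc_smul : ∀ (c : k) (x : M), cyc (c • x) = c • cyc x
  cyc_mem : ∀ {p : ℕ} {x : M}, x ∈ piece p → cyc x ∈ piece p
  cyc_order : ∀ {p : ℕ} {x : M}, x ∈ piece p → cyc^[p + 1] x = x
  cyc_act : ∀ {m p : ℕ} {f : A} {x : M}, f ∈ O.piece m → x ∈ piece p →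
      ∀ i : ℕ, i + m ≤ p → cyc (act f x i) = act f (cyc x) (i + 1)

/-- The cup product `f ⌣ g = (μ ∘₂ f) ∘₁ g`. -/
def NSOperad.cup (O : NSOperad k A) (μ f g : A) : A :=
  O.comp (O.comp μ f 2) g 1

/-- The cap product `i_f x = (μ ∘₂ f) •₀ x`. -/
def CyclicCompModule.cap {M : Type} [AddCommGroup M] [Module k M] {O : NSOperad k A}
    (C : CyclicCompModule O M) (μ f : A) (x : M) : M :=
  C.act (O.comp μ f 2) x 0

/-!
Both cap products act in position `0`, so the comp module relation for nested actions merges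
`i_f i_g x` into the single action of `(μ ∘₂ f) ∘₁ (μ ∘₂ g)` at position `0`. Operad
associativity, together with `μ ∘₁ μ = μ ∘₂ μ`, rewrites this element as `μ ∘₂ (f ⌣ g)`.
-/

namespace NSOperad

variable (O : NSOperad k A)

theorem comp_mem_succ_of_mem_two {n : ℕ} {μ g : A} (hμ : μ ∈ O.piece 2) (hg : g ∈ O.piece n)
    (i : ℕ) : O.comp μ g i ∈ O.piece (n + 1) :=
  (show 2 + n - 1 = n + 1 by omega) ▸ O.comp_mem hμ hg i

theorem comp_comp_two_comp_two_one {m n : ℕ} {μ f g : A} (hμ : μ ∈ O.piece 2)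
    (hmul : O.comp μ μ 1 = O.comp μ μ 2) (hf : f ∈ O.piece m) (hg : g ∈ O.piece n) :
    O.comp (O.comp μ f 2) (O.comp μ g 2) 1 = O.comp μ (O.cup μ f g) 2 := by
  have hμg : O.comp μ g 2 ∈ O.piece (n + 1) := O.comp_mem_succ_of_mem_two hμ hg 2
  have hμg' : O.comp μ g 1 ∈ O.piece (n + 1) := O.comp_mem_succ_of_mem_two hμ hg 1
  calc O.comp (O.comp μ f 2) (O.comp μ g 2) 1
      = O.comp (O.comp μ (O.comp μ g 2) 1) f (n + 2) := by
        rw [O.assoc₁ hμ hf hμg 2 1 (by omega) (by omega) le_rfl,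
          show 2 + (n + 1) - 1 = n + 2 by omega]
    _ = O.comp (O.comp (O.comp μ μ 1) g 2) f (n + 2) := by
        rw [O.assoc₂ hμ hμ hg 1 2 le_rfl (by omega) (by omega)]
    _ = O.comp (O.comp (O.comp μ μ 2) g 2) f (n + 2) := by rw [hmul]
    _ = O.comp (O.comp μ (O.comp μ g 1) 2) f (n + 2) := by
        rw [O.assoc₂ hμ hμ hg 2 2 (by omega) le_rfl (by omega)]
    _ = O.comp μ (O.comp (O.comp μ g 1) f (n + 1)) 2 := by
        rw [O.assoc₂ hμ hμg' hf 2 (n + 2) (by omega) (by omega) (by omega),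
          show n + 2 - 2 + 1 = n + 1 by omega]
    _ = O.comp μ (O.cup μ f g) 2 := by
        rw [cup, O.assoc₁ hμ hf hg 2 1 le_rfl (by omega) le_rfl,
          show 2 + n - 1 = n + 1 by omega]

end NSOperad

namespace CompModule

variable {O : NSOperad k A} {M : Type} [AddCommGroup M] [Module k M] (C : CompModule O M)

theorem act_act_zero {m n p : ℕ} {f g : A} {x : M} (hm : 0 < m) (hf : f ∈ O.piece m)
    (hg : g ∈ O.piece n) (hx : x ∈ C.piece p) :
    C.act f (C.act g x 0) 0 = C.act (O.comp f g 1) x 0 :=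
  C.rel₂ hf hg hx 0 0 (by push_cast; omega) le_rfl

end CompModule

theorem cap_cap_eq_cap_cup_general {M : Type} [AddCommGroup M] [Module k M]
    (O : NSOperad k A) {μ : A} (hμ : μ ∈ O.piece 2) (hmul : O.comp μ μ 1 = O.comp μ μ 2)
    (C : CyclicCompModule O M) {m n p : ℕ} {f g : A} {x : M}
    (hf : f ∈ O.piece m) (hg : g ∈ O.piece n) (hx : x ∈ C.piece p) :
    C.cap μ f (C.cap μ g x) = C.cap μ (O.cup μ f g) x := by
  rw [CyclicCompModule.cap, CyclicCompModule.cap, CyclicCompModule.cap,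
    C.act_act_zero m.succ_pos (O.comp_mem_succ_of_mem_two hμ hf 2)
      (O.comp_mem_succ_of_mem_two hμ hg 2) hx,
    O.comp_comp_two_comp_two_one hμ hmul hf hg]

/-- for a cyclic unital comp module `M` over a multiplicative operad
`(O, μ)`, the cap product satisfies `i_f ∘ i_g = i_{f ⌣ g}`. -/
theorem cap_cap_eq_cap_cup {M : Type} [AddCommGroup M] [Module k M]
    (O : NSOperad k A) {μ : A} (hμ : μ ∈ O.piece 2) (hmul : O.comp μ μ 1 = O.comp μ μ 2)
    (C : CyclicCompModule O M) {m n p : ℕ} {f g : A} {x : M}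
    (hf : f ∈ O.piece m) (hg : g ∈ O.piece n) (hx : x ∈ C.piece p) (hrange : m + n ≤ p) :
    C.cap μ f (C.cap μ g x) = C.cap μ (O.cup μ f g) x :=
  cap_cap_eq_cap_cup_general O hμ hmul C hf hg hx
end
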